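/- arXiv:2603.07389 — 3 statements merged into one kernel-verified Lean document; each statement's English description precedes it below -/
import Mathlib

section
/- Let f : ℝ^d → ℝ be ℓ-smooth and define f_r(θ) = E_{u ∼ Unif(B_d)}[f(θ + ru)]. Then f_r is differentiable and ‖∇f_r(θ) − ∇f(θ)‖ ≤ ℓr for every θ ∈ ℝ^d. -/
open MeasureTheory ProbabilityTheory InnerProductSpace Metric
open scoped NNReal

/-!
Differentiating under the integral sign, with the domination supplied by the bound of the
continuous `fderiv f` on a compact neighbourhood, gives `∇f_r(θ) = 𝔼[∇f(θ + r u)]`. Hence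
`∇f_r(θ) - ∇f(θ) = 𝔼[∇f(θ + r u) - ∇f(θ)]`, whose norm is at most `ℓ r 𝔼‖u‖ ≤ ℓ r`.
-/

theorem Continuous.integrable_of_ae_mem_isCompact {X F : Type*} [TopologicalSpace X] [T2Space X]
    [MeasurableSpace X] [OpensMeasurableSpace X] [NormedAddCommGroup F] {μ : Measure X}
    [IsFiniteMeasure μ] {K : Set X} (hK : IsCompact K) (hμK : ∀ᵐ x ∂μ, x ∈ K) {g : X → F}
    (hg : Continuous g) : Integrable g μ := by
  rw [← Measure.restrict_eq_self_of_ae_mem hμK]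
  exact hg.continuousOn.integrableOn_compact hK

section Smoothing

variable {E F : Type*} [NormedAddCommGroup E] [NormedSpace ℝ E] [ProperSpace E]
  [MeasurableSpace E] [BorelSpace E] [NormedAddCommGroup F] [NormedSpace ℝ F]
  {μ : Measure E}

theorem hasFDerivAt_integral_comp_add_smul [IsFiniteMeasure μ]
    (hμ : ∀ᵐ u ∂μ, u ∈ closedBall (0 : E) 1) {f : E → F} (hf : Differentiable ℝ f)
    (hf' : Continuous (fderiv ℝ f)) (r : ℝ) (θ₀ : E) :
    HasFDerivAt (fun θ => ∫ u, f (θ + r • u) ∂μ) (∫ u, fderiv ℝ f (θ₀ + r • u) ∂μ) θ₀ := by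
  have hshift : ∀ θ : E, Continuous fun u : E => θ + r • u := fun θ => by fun_prop
  obtain ⟨C, hC⟩ := (isCompact_closedBall θ₀ (1 + |r|)).exists_bound_of_continuousOn
    hf'.continuousOn
  refine hasFDerivAt_integral_of_dominated_of_fderiv_le
    (F' := fun θ u => fderiv ℝ f (θ + r • u)) (bound := fun _ => C) (ball_mem_nhds θ₀ one_pos)
    (.of_forall fun θ => (hf.continuous.comp (hshift θ)).aestronglyMeasurable)
    ((hf.continuous.comp (hshift θ₀)).integrable_of_ae_mem_isCompact
      (isCompact_closedBall _ _) hμ)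
    (hf'.comp (hshift θ₀)).aestronglyMeasurable ?_ (integrable_const C)
    (.of_forall fun u θ _ => ?_)
  · refine hμ.mono fun u hu θ hθ => hC _ ?_
    rw [mem_closedBall_zero_iff] at hu
    rw [mem_ball, dist_eq_norm] at hθ
    rw [mem_closedBall, dist_eq_norm, add_sub_right_comm]
    calc ‖θ - θ₀ + r • u‖ ≤ ‖θ - θ₀‖ + |r| * ‖u‖ := by
          simpa only [norm_smul, Real.norm_eq_abs] using norm_add_le (θ - θ₀) (r • u)
      _ ≤ 1 + |r| := by gcongr; exact mul_le_of_le_one_right (abs_nonneg r) hu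
  · exact (hf _).hasFDerivAt.comp θ ((hasFDerivAt_id θ).add_const (r • u))

theorem norm_integral_comp_add_smul_sub_le [CompleteSpace F] [IsProbabilityMeasure μ]
    (hμ : ∀ᵐ u ∂μ, u ∈ closedBall (0 : E) 1) {g : E → F} {K : ℝ≥0} (hg : LipschitzWith K g)
    (r : ℝ) (θ : E) : ‖∫ u, g (θ + r • u) ∂μ - g θ‖ ≤ K * |r| := by
  have hint : Integrable (fun u => g (θ + r • u)) μ :=
    (hg.continuous.comp (by fun_prop)).integrable_of_ae_mem_isCompact
      (isCompact_closedBall _ _) hμ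
  have hdiff : ∫ u, g (θ + r • u) ∂μ - g θ = ∫ u, (g (θ + r • u) - g θ) ∂μ := by
    rw [integral_sub hint (integrable_const _), integral_const, probReal_univ, one_smul]
  rw [hdiff]
  refine (norm_integral_le_of_norm_le_const (hμ.mono fun u hu => ?_)).trans_eq
    (by rw [probReal_univ, mul_one])
  rw [mem_closedBall_zero_iff] at hu
  calc ‖g (θ + r • u) - g θ‖ ≤ K * ‖θ + r • u - θ‖ := hg.norm_sub_le _ _
    _ = K * (|r| * ‖u‖) := by rw [add_sub_cancel_left, norm_smul, Real.norm_eq_abs]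
    _ ≤ K * |r| := by gcongr; exact mul_le_of_le_one_right (abs_nonneg r) hu

end Smoothing

theorem hasGradientAt_integral_comp_add_smul {E : Type*} [NormedAddCommGroup E]
    [InnerProductSpace ℝ E] [ProperSpace E] [MeasurableSpace E] [BorelSpace E] {μ : Measure E}
    [IsFiniteMeasure μ] (hμ : ∀ᵐ u ∂μ, u ∈ closedBall (0 : E) 1) {f : E → ℝ}
    (hf : Differentiable ℝ f) (hf' : Continuous (gradient f)) (r : ℝ) (θ : E) :
    HasGradientAt (fun θ => ∫ u, f (θ + r • u) ∂μ) (∫ u, gradient f (θ + r • u) ∂μ) θ := by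
  have hfderiv : ∀ x, toDual ℝ E (gradient f x) = fderiv ℝ f x := fun x =>
    (toDual ℝ E).apply_symm_apply _
  have hcomm := (toDual ℝ E).toLinearIsometry.integral_comp_comm (μ := μ)
    fun u => gradient f (θ + r • u)
  simp only [LinearIsometryEquiv.coe_toLinearIsometry, hfderiv] at hcomm
  rw [hasGradientAt_iff_hasFDerivAt, ← hcomm]
  exact hasFDerivAt_integral_comp_add_smul hμ hf
    (((toDual ℝ E).continuous.comp hf').congr hfderiv) r θ

theorem ball_smoothing_gradient_bound {d : ℕ} (f : EuclideanSpace ℝ (Fin d) → ℝ) (ℓ r : ℝ)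
    (hℓ : 0 ≤ ℓ) (hr : 0 < r)
    (hdiff : Differentiable ℝ f)
    (hlip : ∀ θ₁ θ₂, ‖gradient f θ₁ - gradient f θ₂‖ ≤ ℓ * ‖θ₁ - θ₂‖)
    (μ : Measure (EuclideanSpace ℝ (Fin d)))
    (hμ : μ = (volume (Metric.closedBall (0 : EuclideanSpace ℝ (Fin d)) 1))⁻¹ •
      volume.restrict (Metric.closedBall (0 : EuclideanSpace ℝ (Fin d)) 1))
    (fr : EuclideanSpace ℝ (Fin d) → ℝ)
    (hfr : fr = fun θ => ∫ u, f (θ + r • u) ∂μ) :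
    Differentiable ℝ fr ∧ ∀ θ, ‖gradient fr θ - gradient f θ‖ ≤ ℓ * r := by
  have hμ_cond : μ = volume[|closedBall 0 1] := hμ
  have : IsProbabilityMeasure μ := hμ_cond ▸ cond_isProbabilityMeasure_of_finite
    (measure_closedBall_pos _ _ one_pos).ne' measure_closedBall_lt_top.ne
  have hsupp : ∀ᵐ u ∂μ, u ∈ closedBall 0 1 := hμ_cond ▸ ae_cond_mem measurableSet_closedBall
  have hgrad : LipschitzWith ⟨ℓ, hℓ⟩ (gradient f) :=
    .of_dist_le_mul fun x y => by rw [dist_eq_norm, dist_eq_norm]; exact hlip x y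
  have hfr_grad : ∀ θ, HasGradientAt fr (∫ u, gradient f (θ + r • u) ∂μ) θ := fun θ =>
    hfr ▸ hasGradientAt_integral_comp_add_smul hsupp hdiff hgrad.continuous r θ
  refine ⟨fun θ => (hfr_grad θ).differentiableAt, fun θ => ?_⟩
  rw [(hfr_grad θ).gradient]
  exact (norm_integral_comp_add_smul_sub_le hsupp hgrad r θ).trans_eq (by rw [abs_of_pos hr]; rfl)
end

section
/- Let g₁, ..., g_m ∈ ℝ^d and let λ* ∈ Δ^m minimize ‖∑_i λ_i g_i‖² over the probability simplex. Set d* = ∑_i λ*_i g_i. Then for every i, ⟨g_i, d*⟩ ≥ ‖d*‖². -/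
open RealInnerProductSpace

theorem mgda_min_norm_inner_bound {d m : ℕ} (g : Fin m → EuclideanSpace ℝ (Fin d))
    (lam : Fin m → ℝ) (hlam : lam ∈ stdSimplex ℝ (Fin m))
    (hmin : ∀ μ ∈ stdSimplex ℝ (Fin m),
      ‖∑ i, lam i • g i‖ ^ 2 ≤ ‖∑ i, μ i • g i‖ ^ 2) :
    ∀ i, ⟪g i, ∑ j, lam j • g j⟫ ≥ ‖∑ j, lam j • g j‖ ^ 2 := by
  intro i
  set D : EuclideanSpace ℝ (Fin d) := ∑ j, lam j • g j with hD
  set v : EuclideanSpace ℝ (Fin d) := g i - D with hv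
  obtain ⟨hnn, hsum⟩ := hlam
  -- key: for all t in (0,1], ‖D‖² ≤ ‖D + t • v‖²
  have key : ∀ t : ℝ, 0 ≤ t → t ≤ 1 → ‖D‖ ^ 2 ≤ ‖D + t • v‖ ^ 2 := by
    intro t ht0 ht1
    set μ : Fin m → ℝ := fun j => (1 - t) * lam j + t * (if j = i then 1 else 0) with hμ
    have hμmem : μ ∈ stdSimplex ℝ (Fin m) := by
      constructor
      · intro j
        have h1 := hnn j
        have h2 : 0 ≤ 1 - t := by linarith
        simp only [hμ]
        split <;> nlinarith
      · simp only [hμ, Finset.sum_add_distrib, ← Finset.mul_sum, hsum,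
          Finset.sum_ite_eq' Finset.univ i (fun _ => (1:ℝ))]
        simp
    have hsumμ : ∑ j, μ j • g j = D + t • v := by
      have h1 : (∑ j, (if j = i then (1:ℝ) else 0) • g j) = g i := by
        rw [Finset.sum_congr rfl (fun j _ => by
          rw [ite_smul, one_smul, zero_smul])]
        simp
      calc ∑ j, μ j • g j
          = (1-t) • (∑ j, lam j • g j) + t • ∑ j, (if j = i then (1:ℝ) else 0) • g j := by
            simp only [hμ, add_smul, mul_smul, Finset.sum_add_distrib, Finset.smul_sum]
        _ = D + t • v := by rw [h1, hv, hD]; module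
    have := hmin μ hμmem
    rw [hsumμ] at this
    exact this
  -- expand
  have expand : ∀ t : ℝ, ‖D + t • v‖ ^ 2 = ‖D‖ ^ 2 + 2 * t * ⟪D, v⟫ + t ^ 2 * ‖v‖ ^ 2 := by
    intro t
    rw [norm_add_sq_real, real_inner_smul_right, norm_smul]
    simp [mul_pow]
    ring
  have key2 : ∀ t : ℝ, 0 < t → t ≤ 1 → 0 ≤ 2 * ⟪D, v⟫ + t * ‖v‖ ^ 2 := by
    intro t ht0 ht1
    have h := key t ht0.le ht1
    rw [expand t] at h
    nlinarith
  have hc : 0 ≤ ⟪D, v⟫ := by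
    by_contra hneg
    push_neg at hneg
    set c := ⟪D, v⟫
    set s := ‖v‖ ^ 2 with hs
    have hs0 : 0 ≤ s := by positivity
    rcases eq_or_lt_of_le hs0 with hseq | hspos
    · have := key2 1 one_pos le_rfl
      rw [← hseq] at this
      linarith
    · set t := min 1 (-c / s) with htdef
      have htpos : 0 < t := lt_min one_pos (div_pos (by linarith) hspos)
      have ht1 : t ≤ 1 := min_le_left _ _
      have h := key2 t htpos ht1
      have hts : t * s ≤ -c := by
        calc t * s ≤ (-c / s) * s := by
              apply mul_le_mul_of_nonneg_right (min_le_right _ _) hs0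
          _ = -c := by field_simp
      linarith
  have hinner : ⟪D, g i⟫ ≥ ‖D‖ ^ 2 := by
    have : ⟪D, v⟫ = ⟪D, g i⟫ - ⟪D, D⟫ := by
      rw [hv, inner_sub_right]
    rw [this, real_inner_self_eq_norm_sq] at hc
    linarith
  rw [real_inner_comm]
  exact hinner
end

section
/- Suppose each f_i is ℓ-smooth, λ ∈ Δ^m, and d = ∑_i λ_i ∇f_i(θ) is the weighted gradient. If for every i one has ⟨∇f_i(θ), d⟩ ≥ ‖d‖², then taking a step θ⁺ = θ − αd with 0 < α ≤ 1/ℓ guarantees f_i(θ⁺) ≤ f_i(θ) − (α/2)‖d‖² for every task i. -/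
/-!
Along the segment `t ↦ x + t • h`, the Lipschitz bound on `∇f` makes the slope of
`f (x + t • h)` exceed its initial slope `⟪∇f x, h⟫` by at most `ℓ t ‖h‖²`, so
`f (x + t • h) - t ⟪∇f x, h⟫ - ℓ/2 t² ‖h‖²` decreases on `[0, 1]`: this is the descent lemma
`f (x + h) ≤ f x + ⟪∇f x, h⟫ + ℓ/2 ‖h‖²`. For the step
`h = -α d` the hypothesis `⟪∇f_i θ, d⟫ ≥ ‖d‖²` turns the linear term into at most `-α ‖d‖²`,
and `ℓ α ≤ 1` caps the quadratic term at `α/2 ‖d‖²`, for every task simultaneously.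
-/

open RealInnerProductSpace

variable {E : Type*} [NormedAddCommGroup E] [InnerProductSpace ℝ E] [CompleteSpace E]
  {f : E → ℝ} {ℓ : ℝ}

theorem DifferentiableAt.hasDerivAt_comp_add_smul {x h : E} {t : ℝ}
    (hf : DifferentiableAt ℝ f (x + t • h)) :
    HasDerivAt (fun s : ℝ => f (x + s • h)) ⟪gradient f (x + t • h), h⟫ t := by
  have hline : HasDerivAt (fun s : ℝ => x + s • h) h t := by
    simpa using ((hasDerivAt_id t).smul_const h).const_add x
  rw [inner_gradient_left]
  exact hf.hasFDerivAt.comp_hasDerivAt t hline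

theorem inner_gradient_add_smul_sub_le
    (hlip : ∀ y z, ‖gradient f y - gradient f z‖ ≤ ℓ * ‖y - z‖) (x h : E) {t : ℝ} (ht : 0 ≤ t) :
    ⟪gradient f (x + t • h), h⟫ - ⟪gradient f x, h⟫ ≤ ℓ * t * ‖h‖ ^ 2 :=
  calc ⟪gradient f (x + t • h), h⟫ - ⟪gradient f x, h⟫
      = ⟪gradient f (x + t • h) - gradient f x, h⟫ := (inner_sub_left _ _ _).symm
    _ ≤ ‖gradient f (x + t • h) - gradient f x‖ * ‖h‖ := real_inner_le_norm _ _
    _ ≤ ℓ * ‖x + t • h - x‖ * ‖h‖ := by gcongr; exact hlip _ _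
    _ = ℓ * t * ‖h‖ ^ 2 := by
      rw [add_sub_cancel_left, norm_smul, Real.norm_of_nonneg ht]; ring

theorem apply_add_le_of_lipschitz_gradient (hf : Differentiable ℝ f)
    (hlip : ∀ y z, ‖gradient f y - gradient f z‖ ≤ ℓ * ‖y - z‖) (x h : E) :
    f (x + h) ≤ f x + ⟪gradient f x, h⟫ + ℓ / 2 * ‖h‖ ^ 2 := by
  set φ : ℝ → ℝ := fun t => f (x + t • h) - t * ⟪gradient f x, h⟫ - ℓ / 2 * t ^ 2 * ‖h‖ ^ 2
  have hφ : ∀ t, HasDerivAt φ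
      (⟪gradient f (x + t • h), h⟫ - ⟪gradient f x, h⟫ - ℓ * t * ‖h‖ ^ 2) t := fun t => by
    refine (((hf (x + t • h)).hasDerivAt_comp_add_smul.fun_sub
      ((hasDerivAt_id t).mul_const ⟪gradient f x, h⟫)).fun_sub
      (((hasDerivAt_pow 2 t).const_mul (ℓ / 2)).mul_const (‖h‖ ^ 2))).congr_deriv ?_
    simp only [Nat.add_one_sub_one, pow_one, Nat.cast_ofNat]; ring
  have hφ_anti : AntitoneOn φ (Set.Icc 0 1) := by
    refine antitoneOn_of_deriv_nonpos (convex_Icc 0 1)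
      (HasDerivAt.continuousOn fun t _ => hφ t)
      (fun t _ => (hφ t).differentiableAt.differentiableWithinAt) fun t ht => ?_
    rw [interior_Icc] at ht
    rw [(hφ t).deriv]
    linarith [inner_gradient_add_smul_sub_le hlip x h ht.1.le]
  have hφ01 : φ 1 ≤ φ 0 :=
    hφ_anti (Set.left_mem_Icc.2 zero_le_one) (Set.right_mem_Icc.2 zero_le_one) zero_le_one
  norm_num [φ, -inner_gradient_left] at hφ01
  linarith

theorem apply_sub_smul_le_of_inner_gradient_ge {α : ℝ} (hf : Differentiable ℝ f)
    (hlip : ∀ y z, ‖gradient f y - gradient f z‖ ≤ ℓ * ‖y - z‖) {x d : E}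
    (hd : ‖d‖ ^ 2 ≤ ⟪gradient f x, d⟫) (hα : 0 ≤ α) (hℓα : ℓ * α ≤ 1) :
    f (x - α • d) ≤ f x - α / 2 * ‖d‖ ^ 2 := by
  have hdescent := apply_add_le_of_lipschitz_gradient hf hlip x (-(α • d))
  rw [← sub_eq_add_neg, inner_neg_right, real_inner_smul_right, norm_neg, norm_smul,
    Real.norm_of_nonneg hα] at hdescent
  have hquad : ℓ * α * (α * ‖d‖ ^ 2) ≤ α * ‖d‖ ^ 2 :=
    mul_le_of_le_one_left (by positivity) hℓα
  nlinarith [mul_le_mul_of_nonneg_left hd hα]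

theorem simultaneous_descent_general {d m : ℕ}
    (f : Fin m → EuclideanSpace ℝ (Fin d) → ℝ) (ℓ : ℝ) (hℓ : 0 < ℓ)
    (hdiff : ∀ i, Differentiable ℝ (f i))
    (hlip : ∀ i θ₁ θ₂, ‖gradient (f i) θ₁ - gradient (f i) θ₂‖ ≤ ℓ * ‖θ₁ - θ₂‖)
    (θ : EuclideanSpace ℝ (Fin d))
    (dvec : EuclideanSpace ℝ (Fin d))
    (hip : ∀ i, ⟪gradient (f i) θ, dvec⟫ ≥ ‖dvec‖ ^ 2)
    (α : ℝ) (hα : 0 < α) (hαℓ : α ≤ 1 / ℓ) :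
    ∀ i, f i (θ - α • dvec) ≤ f i θ - α / 2 * ‖dvec‖ ^ 2 := by
  have hℓα : ℓ * α ≤ 1 := by rwa [le_div_iff₀ hℓ, mul_comm] at hαℓ
  exact fun i => apply_sub_smul_le_of_inner_gradient_ge (hdiff i) (hlip i) (hip i) hα.le hℓα

theorem simultaneous_descent {d m : ℕ}
    (f : Fin m → EuclideanSpace ℝ (Fin d) → ℝ) (ℓ : ℝ) (hℓ : 0 < ℓ)
    (hdiff : ∀ i, Differentiable ℝ (f i))
    (hlip : ∀ i θ₁ θ₂, ‖gradient (f i) θ₁ - gradient (f i) θ₂‖ ≤ ℓ * ‖θ₁ - θ₂‖)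
    (lam : Fin m → ℝ) (hlam : lam ∈ stdSimplex ℝ (Fin m))
    (θ : EuclideanSpace ℝ (Fin d))
    (dvec : EuclideanSpace ℝ (Fin d)) (hdvec : dvec = ∑ i, lam i • gradient (f i) θ)
    (hip : ∀ i, ⟪gradient (f i) θ, dvec⟫ ≥ ‖dvec‖ ^ 2)
    (α : ℝ) (hα : 0 < α) (hαℓ : α ≤ 1 / ℓ) :
    ∀ i, f i (θ - α • dvec) ≤ f i θ - α / 2 * ‖dvec‖ ^ 2 :=
  simultaneous_descent_general f ℓ hℓ hdiff hlip θ dvec hip α hα hαℓ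
end
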